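/- Let f : (0,∞) × ℝ → ℂ be smooth in the space variable (C^k in x for every t > 0). With 𝒯(f)(t,x) := t^{−1/2} e^{i x²/(4t)} \overline{f}(1/t, x/t) and J(f)(t,x) := (x/2 + i t ∂_x) f(t,x), one has for every k ∈ ℕ and all (t,x) ∈ (0,∞) × ℝ the identity ∂_x^k (𝒯 f)(t,x) = 𝒯((−i)^k J^k f)(t,x), where J^k denotes the k-fold composition of J. -/

import Mathlib

noncomputable section

/-- The pseudo-conformal transformation
`𝒯(f)(t,x) = t^{−1/2} e^{i x²/(4t)} conj(f)(1/t, x/t)`. -/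
def pct (f : ℝ → ℝ → ℂ) (t x : ℝ) : ℂ :=
  ((1 / Real.sqrt t : ℝ) : ℂ) * Complex.exp (Complex.I * (x : ℂ) ^ 2 / (4 * (t : ℂ))) *
    (starRingEnd ℂ) (f (1 / t) (x / t))

/-- The pseudo-conformal operator `J(f)(t,x) = (x/2 + i t ∂_x) f(t,x)`. -/
def Jop (f : ℝ → ℝ → ℂ) : ℝ → ℝ → ℂ :=
  fun t x => ((x : ℂ) / 2) * f t x + Complex.I * (t : ℂ) * deriv (fun y => f t y) x

/-!
Differentiating `𝒯 g` in `x` hits the Gaussian phase, producing the factor `i x / (2t)`, and the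
rescaled conjugate `conj g(1/t, x/t)`, producing `conj (∂ₓ g)(1/t, x/t) / t`. After conjugation these
are exactly the two terms of `-i J g` evaluated at `(1/t, x/t)`, so `∂ₓ 𝒯 = 𝒯 (-i J)`; iterating,
using that `J` commutes with constant factors and preserves smoothness in `x`, gives the formula for `∂ₓᵏ`.
-/

open Complex ComplexConjugate
open scoped ContDiff

theorem hasDerivAt_cexp_I_mul_sq_div (t x : ℝ) :
    HasDerivAt (fun y : ℝ => cexp (I * (y : ℂ) ^ 2 / (4 * t)))
      (cexp (I * (x : ℂ) ^ 2 / (4 * t)) * (I * x / (2 * t))) x := by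
  have hsq : HasDerivAt (fun y : ℝ => (y : ℂ) ^ 2) (2 * (x : ℂ)) x := by
    simpa using (hasDerivAt_pow 2 (x : ℂ)).comp_ofReal
  refine ((hsq.const_mul I).div_const (4 * (t : ℂ))).cexp.congr_deriv ?_
  ring

theorem hasDerivAt_conj_comp_div {g : ℝ → ℂ} {g' : ℂ} {t x : ℝ} (hg : HasDerivAt g g' (x / t)) :
    HasDerivAt (fun y => conj (g (y / t))) (conj g' / t) x := by
  have hcomp : HasDerivAt (fun y => g (y / t)) (g' / t) x := by
    simpa [Function.comp_def, real_smul, div_eq_inv_mul, mul_comm] using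
      hg.scomp x ((hasDerivAt_id x).div_const t)
  simpa using hcomp.star

theorem hasDerivAt_pct (g : ℝ → ℝ → ℂ) {g' : ℂ} (t x : ℝ) (hg : HasDerivAt (g (1 / t)) g' (x / t)) :
    HasDerivAt (fun y => pct g t y)
      (((1 / Real.sqrt t : ℝ) : ℂ) * cexp (I * (x : ℂ) ^ 2 / (4 * t)) *
        (I * x / (2 * t) * conj (g (1 / t) (x / t)) + conj g' / t)) x :=
  (((hasDerivAt_cexp_I_mul_sq_div t x).const_mul _).mul (hasDerivAt_conj_comp_div hg)).congr_deriv
    (by ring)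

theorem deriv_pct (g : ℝ → ℝ → ℂ) (t x : ℝ) (hg : DifferentiableAt ℝ (g (1 / t)) (x / t)) :
    deriv (fun y => pct g t y) x = pct (fun s y => -I * Jop g s y) t x := by
  rw [(hasDerivAt_pct g t x hg.hasDerivAt).deriv]
  simp only [pct, Jop, map_mul, map_add, map_neg, conj_I, map_ofNat, map_div₀, conj_ofReal]
  push_cast
  linear_combination (1 / ((Real.sqrt t : ℝ) : ℂ) * cexp (I * (x : ℂ) ^ 2 / (4 * t)) *
    conj (deriv (g (1 / t)) (x / t)) / t) * I_sq

theorem Jop_const_mul (c : ℂ) (g : ℝ → ℝ → ℂ) :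
    Jop (fun s y => c * g s y) = fun s y => c * Jop g s y := by
  funext s y
  simp only [Jop, deriv_const_mul_field]
  ring

theorem contDiff_Jop {g : ℝ → ℝ → ℂ} {t : ℝ} (hg : ContDiff ℝ ∞ (g t)) :
    ContDiff ℝ ∞ (Jop g t) :=
  ((ofRealCLM.contDiff.div_const 2).mul hg).add
    (contDiff_const.mul (contDiff_infty_iff_deriv.mp hg).2)

theorem contDiff_iterate_Jop {g : ℝ → ℝ → ℂ} {t : ℝ} (hg : ContDiff ℝ ∞ (g t)) (k : ℕ) :
    ContDiff ℝ ∞ (Jop^[k] g t) := by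
  induction k with
  | zero => exact hg
  | succ k ih => simpa only [Function.iterate_succ_apply'] using contDiff_Jop ih

/-- For `f` smooth in the space variable,
`∂_x^k (𝒯 f)(t,x) = 𝒯((−i)^k J^k f)(t,x)` for every `k` and all `t > 0`, `x ∈ ℝ`. -/
theorem iteratedDeriv_pct_eq_pct_Jiter (f : ℝ → ℝ → ℂ)
    (hf : ∀ t : ℝ, 0 < t → ContDiff ℝ (⊤ : ℕ∞) (fun x => f t x)) :
    ∀ k : ℕ, ∀ t : ℝ, 0 < t → ∀ x : ℝ,
      iteratedDeriv k (fun y => pct f t y) x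
        = pct (fun s y => (-Complex.I) ^ k * (Jop^[k] f) s y) t x := by
  intro k t ht
  induction k with
  | zero => intro x; simp
  | succ k ih =>
    intro x
    have hdiff : Differentiable ℝ (fun y => (-I) ^ k * (Jop^[k] f) (1 / t) y) :=
      ((contDiff_iterate_Jop (hf _ (one_div_pos.mpr ht)) k).differentiable (by simp)).const_mul _
    rw [iteratedDeriv_succ, funext ih, deriv_pct _ t x (hdiff _), Jop_const_mul]
    simp only [Function.iterate_succ_apply', pow_succ', mul_assoc]
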